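/- arXiv:2509.19649 — 2 statements merged into one kernel-verified Lean document; each statement's English description precedes it below -/
import Mathlib

section
/- Let λ, μ be partitions of length at most n with |λ| = |μ|. If M_λ(x) − M_μ(x) ≥ 0 for all x ∈ (0,1)^n ∪ (1,∞)^n, then λ majorizes μ. -/
open Finset

/-- The normalized monomial symmetric function `M_λ(x) = m_λ(x)/m_λ(1,…,1)`,
written as the average over the symmetric group of the monomials `x^{σ·λ}`. -/
noncomputable def normMonomial {n : ℕ} (l : Fin n → ℕ) (x : Fin n → ℝ) : ℝ :=
  (∑ σ : Equiv.Perm (Fin n), ∏ i, x i ^ l (σ i)) / (Nat.factorial n)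

/-- Any permutation of an antitone sequence has prefix sums dominated by the
original prefix sums. -/
lemma perm_prefix_sum_le {n k : ℕ} (l : Fin n → ℕ)
    (hl : ∀ i j : Fin n, i ≤ j → l j ≤ l i) (σ : Equiv.Perm (Fin n)) :
    ∑ i ∈ Finset.univ.filter (fun i : Fin n => (i : ℕ) < k), l (σ i) ≤
      ∑ i ∈ Finset.univ.filter (fun i : Fin n => (i : ℕ) < k), l i := by
  have hmono : Monovary (fun i : Fin n => if (i : ℕ) < k then (1 : ℕ) else 0) l := by
    intro i j hij
    have hji : j < i := by
      by_contra h
      exact absurd (hl i j (le_of_not_gt h)) (not_le_of_gt hij)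
    by_cases hi : (i : ℕ) < k
    · have : (j : ℕ) < k := lt_trans (Fin.lt_iff_val_lt_val.mp hji) hi
      simp [hi, this]
    · simp [hi]
  have key := hmono.sum_mul_comp_perm_le_sum_mul (σ := σ)
  simpa [Finset.sum_filter, ite_mul, one_mul, zero_mul] using key

/-- If the normalized monomial difference `M_λ - M_μ` is nonnegative on
`(0,1)^n ∪ (1,∞)^n`, then `λ` majorizes `μ`. -/
theorem majorization_of_normMonomial_nonneg
    (n : ℕ) (l m : Fin n → ℕ)
    (hl : ∀ i j : Fin n, i ≤ j → l j ≤ l i)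
    (hm : ∀ i j : Fin n, i ≤ j → m j ≤ m i)
    (hsum : ∑ i, l i = ∑ i, m i)
    (hpos : ∀ x : Fin n → ℝ,
      ((∀ i, 0 < x i ∧ x i < 1) ∨ (∀ i, 1 < x i)) →
      normMonomial m x ≤ normMonomial l x) :
    (∀ k : ℕ, ∑ i ∈ Finset.univ.filter (fun i : Fin n => (i : ℕ) < k), m i ≤
      ∑ i ∈ Finset.univ.filter (fun i : Fin n => (i : ℕ) < k), l i) ∧
    ∑ i, l i = ∑ i, m i := by
  refine ⟨fun k => ?_, hsum⟩
  set Lk := ∑ i ∈ Finset.univ.filter (fun i : Fin n => (i : ℕ) < k), l i with hLk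
  set Mk := ∑ i ∈ Finset.univ.filter (fun i : Fin n => (i : ℕ) < k), m i with hMk
  by_contra hcon
  push_neg at hcon
  -- so Lk + 1 ≤ Mk
  have hLM : Lk + 1 ≤ Mk := hcon
  set S := ∑ i, l i with hS
  set C : ℝ := (n.factorial : ℝ) * 2 ^ S with hC
  have hCpos : 0 < C := by positivity
  set t : ℝ := C + 2 with ht
  have ht2 : (2 : ℝ) ≤ t := by
    have := hCpos.le
    linarith
  have ht1 : (1 : ℝ) < t := by linarith
  set x : Fin n → ℝ := fun i => if (i : ℕ) < k then t else 2 with hx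
  have hx1 : ∀ i, 1 < x i := by
    intro i
    simp only [hx]
    split <;> [exact ht1; norm_num]
  have hxpos : ∀ i, 0 < x i := fun i => lt_trans one_pos (hx1 i)
  -- lower bound: identity term
  have hlow : t ^ Mk ≤ ∑ σ : Equiv.Perm (Fin n), ∏ i, x i ^ m (σ i) := by
    have h1 : t ^ Mk ≤ ∏ i, x i ^ m i := by
      have : ∏ i, x i ^ m i =
          (∏ i ∈ Finset.univ.filter (fun i : Fin n => (i : ℕ) < k), x i ^ m i) *
          ∏ i ∈ Finset.univ.filter (fun i : Fin n => ¬ (i : ℕ) < k), x i ^ m i := by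
        rw [← Finset.prod_filter_mul_prod_filter_not Finset.univ (fun i : Fin n => (i : ℕ) < k)]
      rw [this]
      have hA : (∏ i ∈ Finset.univ.filter (fun i : Fin n => (i : ℕ) < k), x i ^ m i)
          = t ^ Mk := by
        rw [hMk, ← Finset.prod_pow_eq_pow_sum]
        refine Finset.prod_congr rfl fun i hi => ?_
        simp only [Finset.mem_filter] at hi
        simp [hx, hi.2]
      rw [hA]
      have hB : (1 : ℝ) ≤ ∏ i ∈ Finset.univ.filter (fun i : Fin n => ¬ (i : ℕ) < k),
          x i ^ m i := by
        have := Finset.prod_le_prod (s := Finset.univ.filter (fun i : Fin n => ¬ (i : ℕ) < k))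
          (f := fun _ : Fin n => (1:ℝ)) (g := fun i => x i ^ m i)
          (fun i _ => zero_le_one) (fun i _ => one_le_pow₀ (hx1 i).le)
        simpa using this
      nlinarith [pow_pos (lt_trans one_pos ht1) Mk]
    calc t ^ Mk ≤ ∏ i, x i ^ m (Equiv.refl (Fin n) i) := by simpa using h1
    _ ≤ ∑ σ : Equiv.Perm (Fin n), ∏ i, x i ^ m (σ i) := by
        refine Finset.single_le_sum (f := fun σ : Equiv.Perm (Fin n) =>
          ∏ i, x i ^ m (σ i)) (fun σ _ => ?_) (Finset.mem_univ _)
        exact Finset.prod_nonneg fun i _ => pow_nonneg (hxpos i).le _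
  -- upper bound: each term of l-sum is ≤ t^Lk * 2^S
  have hup : ∀ σ : Equiv.Perm (Fin n), ∏ i, x i ^ l (σ i) ≤ t ^ Lk * 2 ^ S := by
    intro σ
    have hsplit : ∏ i, x i ^ l (σ i) =
        (∏ i ∈ Finset.univ.filter (fun i : Fin n => (i : ℕ) < k), x i ^ l (σ i)) *
        ∏ i ∈ Finset.univ.filter (fun i : Fin n => ¬ (i : ℕ) < k), x i ^ l (σ i) := by
      rw [← Finset.prod_filter_mul_prod_filter_not Finset.univ (fun i : Fin n => (i : ℕ) < k)]
    rw [hsplit]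
    have hA : (∏ i ∈ Finset.univ.filter (fun i : Fin n => (i : ℕ) < k), x i ^ l (σ i))
        = t ^ (∑ i ∈ Finset.univ.filter (fun i : Fin n => (i : ℕ) < k), l (σ i)) := by
      rw [← Finset.prod_pow_eq_pow_sum]
      refine Finset.prod_congr rfl fun i hi => ?_
      simp only [Finset.mem_filter] at hi
      simp [hx, hi.2]
    have hB : (∏ i ∈ Finset.univ.filter (fun i : Fin n => ¬ (i : ℕ) < k), x i ^ l (σ i))
        = 2 ^ (∑ i ∈ Finset.univ.filter (fun i : Fin n => ¬ (i : ℕ) < k), l (σ i)) := by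
      rw [← Finset.prod_pow_eq_pow_sum]
      refine Finset.prod_congr rfl fun i hi => ?_
      simp only [Finset.mem_filter] at hi
      simp [hx, hi.2]
    rw [hA, hB]
    have h1 : t ^ (∑ i ∈ Finset.univ.filter (fun i : Fin n => (i : ℕ) < k), l (σ i))
        ≤ t ^ Lk := by
      exact pow_le_pow_right₀ ht1.le (perm_prefix_sum_le l hl σ)
    have h2 : (2:ℝ) ^ (∑ i ∈ Finset.univ.filter (fun i : Fin n => ¬ (i : ℕ) < k), l (σ i))
        ≤ 2 ^ S := by
      refine pow_le_pow_right₀ (by norm_num) ?_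
      rw [hS]
      calc ∑ i ∈ Finset.univ.filter (fun i : Fin n => ¬ (i : ℕ) < k), l (σ i)
          ≤ ∑ i, l (σ i) := Finset.sum_le_sum_of_subset (Finset.filter_subset _ _)
        _ = ∑ i, l i := Equiv.sum_comp σ l
    have hp1 : (0:ℝ) ≤ t ^ (∑ i ∈ Finset.univ.filter (fun i : Fin n => (i : ℕ) < k), l (σ i)) :=
      pow_nonneg (by linarith) _
    have hp2 : (0:ℝ) ≤ (2:ℝ) ^ (∑ i ∈ Finset.univ.filter (fun i : Fin n => ¬ (i : ℕ) < k), l (σ i)) :=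
      pow_nonneg (by norm_num) _
    exact mul_le_mul h1 h2 hp2 (pow_nonneg (by linarith) _)
  -- combine
  have hsum_up : ∑ σ : Equiv.Perm (Fin n), ∏ i, x i ^ l (σ i)
      ≤ (n.factorial : ℝ) * (t ^ Lk * 2 ^ S) := by
    calc ∑ σ : Equiv.Perm (Fin n), ∏ i, x i ^ l (σ i)
        ≤ ∑ _σ : Equiv.Perm (Fin n), t ^ Lk * 2 ^ S :=
          Finset.sum_le_sum fun σ _ => hup σ
      _ = (Fintype.card (Equiv.Perm (Fin n)) : ℝ) * (t ^ Lk * 2 ^ S) := by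
          rw [Finset.sum_const, nsmul_eq_mul]; norm_num
      _ = (n.factorial : ℝ) * (t ^ Lk * 2 ^ S) := by
          rw [Fintype.card_perm, Fintype.card_fin]
  have hmain := hpos x (Or.inr hx1)
  rw [normMonomial, normMonomial, div_le_div_iff_of_pos_right
    (by positivity : (0:ℝ) < (n.factorial : ℝ))] at hmain
  have hfinal : t ^ Mk ≤ (n.factorial : ℝ) * (t ^ Lk * 2 ^ S) :=
    le_trans hlow (le_trans hmain hsum_up)
  -- but t^Mk ≥ t^(Lk+1) = t * t^Lk, so t ≤ n! * 2^S = C < t, contradiction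
  have h3 : t ^ (Lk + 1) ≤ t ^ Mk := pow_le_pow_right₀ ht1.le hLM
  have h4 : t * t ^ Lk ≤ C * t ^ Lk := by
    have : t ^ (Lk + 1) = t * t ^ Lk := by ring
    rw [this] at h3
    calc t * t ^ Lk ≤ (n.factorial : ℝ) * (t ^ Lk * 2 ^ S) := le_trans h3 hfinal
      _ = C * t ^ Lk := by rw [hC]; ring
  have htLk : (0:ℝ) < t ^ Lk := pow_pos (by linarith) _
  have : t ≤ C := le_of_mul_le_mul_right h4 htLk
  linarith
end

section
/- Telescoping identity for two-variable Jack coefficients: define a_i(τ) = 2(C(d,i)⟨τ⟩_i⟨τ⟩_{d−i}/⟨2τ⟩_d − C(d−2,i−1)⟨τ⟩_{i−1}⟨τ⟩_{d−i−1}/⟨2τ⟩_{d−2}) for 0 ≤ i ≤ ⌊(d−1)/2⌋ (and halve the formula when d is even and i = d/2). Then for 0 ≤ i ≤ ⌊d/2⌋−1, Σ_{j≤i} a_j(τ) = 2·C(d−1,i)·((d−1−2i)/(d−1))·(⟨τ⟩_i⟨τ⟩_{d−i−1}/⟨2τ⟩_d)·(τ+d−1), which is a ratio of polynomials in τ with nonnegative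 coefficients. -/
set_option maxHeartbeats 2000000


open Finset

/-- The rising factorial (Pochhammer symbol) `⟨x⟩_k = x(x+1)⋯(x+k-1)`. -/
noncomputable def poch (x : ℝ) (k : ℕ) : ℝ := ∏ i ∈ Finset.range k, (x + i)

/-- Binomial coefficient with an integer lower index (zero when the index is negative). -/
def chooseZ (n : ℕ) (k : ℤ) : ℕ := if k < 0 then 0 else n.choose k.toNat

/-- The coefficients `a_i = 2 f_i` of the two-variable Jack difference
`P_{(d,0)}/P_{(d,0)}(1) - P_{(d-1,1)}/P_{(d-1,1)}(1)` in the monomial basis. -/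
noncomputable def aCoeff (d i : ℕ) (τ : ℝ) : ℝ :=
  2 * ((d.choose i) * poch τ i * poch τ (d - i) / poch (2 * τ) d -
    (chooseZ (d - 2) ((i : ℤ) - 1)) * poch τ (i - 1) * poch τ (d - i - 1) /
      poch (2 * τ) (d - 2))

lemma poch_pos {x : ℝ} (hx : 0 < x) (k : ℕ) : 0 < poch x k :=
  Finset.prod_pos (fun i _ => by positivity)

lemma poch_succ (x : ℝ) (k : ℕ) : poch x (k + 1) = poch x k * (x + k) :=
  Finset.prod_range_succ _ _

lemma poch_zero (x : ℝ) : poch x 0 = 1 := Finset.prod_range_zero _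

lemma chooseZ_natCast (n k : ℕ) : chooseZ n (k : ℤ) = n.choose k := by simp [chooseZ]

lemma key (m : ℕ) (τ : ℝ) (hτ : 0 < τ) :
    ∀ i : ℕ, i + 1 ≤ (m + 2) / 2 →
      ∑ j ∈ Finset.range (i + 1), aCoeff (m + 2) j τ =
      2 * ((m + 1).choose i) * (((m : ℝ) + 1 - 2 * i) / ((m : ℝ) + 1)) *
        (poch τ i * poch τ (m + 2 - i - 1) / poch (2 * τ) (m + 2)) * (τ + (m + 2) - 1) := by
  have hP2 : (0:ℝ) < 2 * τ := by linarith
  have hPd : poch (2 * τ) (m + 2) ≠ 0 := ne_of_gt (poch_pos hP2 _)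
  have hPm : poch (2 * τ) m ≠ 0 := ne_of_gt (poch_pos hP2 _)
  intro i
  induction i with
  | zero =>
    intro _
    rw [Finset.sum_range_one]
    simp only [aCoeff, Nat.choose_zero_right, Nat.cast_one, poch_zero, Nat.sub_zero,
      Nat.zero_sub, Nat.cast_zero]
    have hch : chooseZ (m + 2 - 2) ((0 : ℤ) - 1) = 0 := by simp [chooseZ]
    rw [hch]
    have h1 : m + 2 - 1 = m + 1 := by omega
    rw [h1]
    have h2 : poch τ (m + 2) = poch τ (m + 1) * (τ + (m + 1)) := by
      rw [poch_succ]; push_cast; ring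
    rw [h2]
    have hm1 : ((m : ℝ) + 1) ≠ 0 := by positivity
    field_simp
    push_cast
    ring
  | succ i ih =>
    intro hi
    have hm : 2 * i + 2 ≤ m := by omega
    have him : (i : ℝ) ≤ m := Nat.cast_le.mpr (by omega)
    rw [Finset.sum_range_succ, ih (by omega)]
    have e1 : m + 2 - i - 1 = (m - i) + 1 := by omega
    have e2 : m + 2 - (i + 1) = (m - i) + 1 := by omega
    have e3 : m + 2 - (i + 1) - 1 = m - i := by omega
    have ech : ((i + 1 : ℕ) : ℤ) - 1 = ((i : ℕ) : ℤ) := by push_cast; ring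
    simp only [aCoeff, Nat.add_sub_cancel, ech, chooseZ_natCast, e1, e2, e3]
    have hsplit : poch (2 * τ) (m + 2) = poch (2 * τ) m * (2 * τ + m) * (2 * τ + (m + 1)) := by
      rw [show m + 2 = m + 1 + 1 from rfl, poch_succ, poch_succ]; push_cast; ring
    have hk : ((m - i : ℕ) : ℝ) = (m : ℝ) - i := by
      rw [Nat.cast_sub (by omega)]
    rw [hsplit, poch_succ, poch_succ, hk]
    have hW : (((m + 2).choose (i + 1) : ℕ) : ℝ) =
        ((m + 1).choose i : ℝ) + ((m + 1).choose (i + 1) : ℝ) := by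
      rw [Nat.choose_succ_succ (m + 1) i]; push_cast; ring
    have hY : (((m + 1).choose (i + 1) : ℕ) : ℝ) =
        ((m : ℝ) + 1) * (m.choose i : ℝ) / ((i : ℝ) + 1) := by
      rw [eq_div_iff (by positivity)]
      have h := congrArg (Nat.cast : ℕ → ℝ) (Nat.add_one_mul_choose_eq m i)
      push_cast at h
      linarith
    have hX : (((m + 1).choose i : ℕ) : ℝ) =
        ((m : ℝ) + 1) * (m.choose i : ℝ) / ((m : ℝ) + 1 - i) := by
      rw [eq_div_iff (by nlinarith)]
      have h := congrArg (Nat.cast : ℕ → ℝ) (Nat.choose_mul_succ_eq m i)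
      push_cast [Nat.cast_sub (by omega : i ≤ m + 1)] at h
      linarith
    rw [hW, hY, hX]
    have hA : poch τ i ≠ 0 := ne_of_gt (poch_pos hτ _)
    have hB : poch τ (m - i) ≠ 0 := ne_of_gt (poch_pos hτ _)
    have hd1 : (2 * τ + (m : ℝ)) ≠ 0 := by positivity
    have hd2 : (2 * τ + ((m : ℝ) + 1)) ≠ 0 := by positivity
    have hd3 : ((m : ℝ) + 1) ≠ 0 := by positivity
    have hd4 : ((i : ℝ) + 1) ≠ 0 := by positivity
    have hd5 : ((m : ℝ) + 1 - i) ≠ 0 := by nlinarith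
    field_simp
    push_cast
    ring

/-- Telescoping identity: for `0 ≤ i ≤ ⌊d/2⌋ - 1`, the partial sum `Σ_{j≤i} a_j`
equals `2·C(d-1,i)·((d-1-2i)/(d-1))·(⟨τ⟩_i ⟨τ⟩_{d-i-1}/⟨2τ⟩_d)·(τ+d-1)`,
a quantity that is nonnegative for `τ > 0`. -/
theorem aCoeff_partial_sum (d : ℕ) (hd : 2 ≤ d) (τ : ℝ) (hτ : 0 < τ)
    (i : ℕ) (hi : i + 1 ≤ d / 2) :
    ∑ j ∈ Finset.range (i + 1), aCoeff d j τ =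
      2 * ((d - 1).choose i) * (((d : ℝ) - 1 - 2 * i) / ((d : ℝ) - 1)) *
        (poch τ i * poch τ (d - i - 1) / poch (2 * τ) d) * (τ + d - 1) ∧
    0 ≤ 2 * ((d - 1).choose i) * (((d : ℝ) - 1 - 2 * i) / ((d : ℝ) - 1)) *
        (poch τ i * poch τ (d - i - 1) / poch (2 * τ) d) * (τ + d - 1) := by
  obtain ⟨m, rfl⟩ : ∃ m, d = m + 2 := ⟨d - 2, by omega⟩
  have h2i : 2 * i ≤ m := by omega
  have h2iR : 2 * (i : ℝ) ≤ m := by exact_mod_cast h2i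
  have heq : ∑ j ∈ Finset.range (i + 1), aCoeff (m + 2) j τ =
      2 * (((m + 2 - 1)).choose i) * (((m + 2 : ℕ) : ℝ) - 1 - 2 * i) / (((m + 2 : ℕ) : ℝ) - 1) *
        (poch τ i * poch τ (m + 2 - i - 1) / poch (2 * τ) (m + 2)) * (τ + ((m + 2 : ℕ) : ℝ) - 1) := by
    rw [key m τ hτ i hi]
    have : m + 2 - 1 = m + 1 := rfl
    rw [this]
    push_cast
    ring
  constructor
  · rw [heq]; push_cast; ring
  · have hA : 0 < poch τ i := poch_pos hτ _
    have hB : 0 < poch τ (m + 2 - i - 1) := poch_pos hτ _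
    have hP : 0 < poch (2 * τ) (m + 2) := poch_pos (by linarith) _
    have c1 : (0:ℝ) ≤ 2 * ((m + 2 - 1).choose i) := by positivity
    have c2 : (0:ℝ) ≤ (((m + 2 : ℕ) : ℝ) - 1 - 2 * i) / (((m + 2 : ℕ) : ℝ) - 1) := by
      apply div_nonneg <;> push_cast <;> linarith
    have c3 : (0:ℝ) ≤ poch τ i * poch τ (m + 2 - i - 1) / poch (2 * τ) (m + 2) := by
      apply div_nonneg (by positivity) hP.le
    have c4 : (0:ℝ) ≤ τ + ((m + 2 : ℕ) : ℝ) - 1 := by push_cast; linarith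
    exact mul_nonneg (mul_nonneg (mul_nonneg c1 c2) c3) c4
end
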